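/- arXiv:2508.09569 — 2 statements merged into one kernel-verified Lean document; each statement's English description precedes it below -/
import Mathlib

section
/- For all real y > 0, −y·ψ₁(y) − y²·ψ₂(y) > 0, where ψ₁ and ψ₂ are the polygamma functions of orders one and two. -/
open Filter Topology

lemma hasSum_telescope {g : ℕ → ℝ} (hg : ∀ n, g (n + 1) ≤ g n)
    (h0 : Tendsto g atTop (𝓝 0)) : HasSum (fun n => g n - g (n + 1)) (g 0) := by
  rw [hasSum_iff_tendsto_nat_of_nonneg (fun i => sub_nonneg.2 (hg i))]
  have h1 : ∀ n, ∑ i ∈ Finset.range n, (g i - g (i + 1)) = g 0 - g n :=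
    fun n => Finset.sum_range_sub' g n
  simp only [h1]
  simpa using tendsto_const_nhds.sub h0

lemma tendsto_pow_shift {x : ℝ} {n : ℕ} (hn : n ≠ 0) :
    Tendsto (fun v : ℕ => 1 / (x + v) ^ n) atTop (𝓝 0) := by
  have h1 : Tendsto (fun v : ℕ => x + (v : ℝ)) atTop atTop :=
    tendsto_atTop_add_const_left _ x tendsto_natCast_atTop_atTop
  have h2 : Tendsto (fun v : ℕ => (x + (v : ℝ)) ^ n) atTop atTop :=
    (tendsto_pow_atTop hn).comp h1
  have h3 := h2.inv_tendsto_atTop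
  simp only [one_div]
  exact h3

lemma pos_shift {x : ℝ} (hx : 0 < x) (v : ℕ) : 0 < x + (v : ℝ) := by
  have : (0:ℝ) ≤ v := Nat.cast_nonneg v
  linarith

lemma hasSum_tele_pow {x : ℝ} (hx : 0 < x) {n : ℕ} (hn : n ≠ 0) :
    HasSum (fun v : ℕ => 1 / (x + v) ^ n - 1 / (x + v + 1) ^ n) (1 / x ^ n) := by
  have hg : ∀ v : ℕ, 1 / (x + ((v:ℕ)+1:ℕ)) ^ n ≤ 1 / (x + v) ^ n := by
    intro v
    have h1 : 0 < x + (v:ℝ) := pos_shift hx v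
    have h2 : (x + v) ^ n ≤ (x + ((v:ℕ)+1:ℕ):ℝ) ^ n := by
      apply pow_le_pow_left₀ h1.le
      push_cast; linarith
    exact one_div_le_one_div_of_le (pow_pos h1 n) h2
  have h := hasSum_telescope (g := fun v : ℕ => 1 / (x + v) ^ n) hg (tendsto_pow_shift hn)
  have he : (fun v : ℕ => 1 / (x + v) ^ n - 1 / (x + ((v:ℕ)+1:ℕ):ℝ) ^ n)
      = fun v : ℕ => 1 / (x + v) ^ n - 1 / (x + v + 1) ^ n := by
    funext v; push_cast; ring_nf
  rw [he] at h
  simpa using h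

lemma summable_aux {x : ℝ} (hx : 0 < x) {p : ℕ} (hp : 1 < p) :
    Summable (fun v : ℕ => 1 / (x + v) ^ p) := by
  have hbase : Summable (fun v : ℕ => 1 / ((v:ℝ) + 1) ^ p) := by
    have h0 := (Real.summable_one_div_nat_pow (p := p)).2 hp
    have h1 := (summable_nat_add_iff 1).2 h0
    exact h1.congr (by intro n; push_cast; ring)
  set m := min x 1 with hm
  have hm0 : 0 < m := lt_min hx one_pos
  have key : ∀ v : ℕ, 1 / (x + v) ^ p ≤ (1 / m ^ p) * (1 / ((v:ℝ) + 1) ^ p) := by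
    intro v
    have hv : (0:ℝ) ≤ v := Nat.cast_nonneg v
    have h1 : m * ((v:ℝ) + 1) ≤ x + v := by
      have hmx : m ≤ x := min_le_left _ _
      have hm1 : m ≤ 1 := min_le_right _ _
      nlinarith
    have h2 : (m * ((v:ℝ)+1)) ^ p ≤ (x + v) ^ p :=
      pow_le_pow_left₀ (by positivity) h1 p
    calc 1 / (x + v) ^ p ≤ 1 / (m * ((v:ℝ)+1)) ^ p :=
          one_div_le_one_div_of_le (by positivity) h2
      _ = (1 / m ^ p) * (1 / ((v:ℝ) + 1) ^ p) := by rw [mul_pow]; ring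
  exact Summable.of_nonneg_of_le (fun v => by positivity) key (hbase.mul_left _)


lemma ineqB {a : ℝ} (ha : 0 < a) : 1/2 * (1/a^2 - 1/(a+1)^2) < 1/a^3 := by
  have h1 : (0:ℝ) < a + 1 := by linarith
  rw [show (1:ℝ)/2 * (1/a^2 - 1/(a+1)^2) = (2*a+1)/(2*a^2*(a+1)^2) from by
    field_simp; ring]
  rw [div_lt_div_iff₀ (by positivity) (by positivity)]
  nlinarith [pow_pos ha 2, pow_pos ha 3]

lemma lower_S3 {x : ℝ} (hx : 0 < x) : 1/(2*x^2) < ∑' v : ℕ, 1/(x+v)^3 := by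
  have htel : HasSum (fun v : ℕ => 1/2 * (1/(x+v)^2 - 1/(x+v+1)^2)) (1/(2*x^2)) := by
    have h := (hasSum_tele_pow hx (n := 2) two_ne_zero).mul_left (1/2)
    have e : 1/(2*x^2) = 1/2 * (1/x^2) := by ring
    rw [e]; exact h
  have hstrict : ∀ v : ℕ, 1/2 * (1/(x+(v:ℝ))^2 - 1/(x+v+1)^2) < 1/(x+(v:ℝ))^3 :=
    fun v => ineqB (pos_shift hx v)
  calc 1/(2*x^2) = ∑' v : ℕ, 1/2 * (1/(x+(v:ℝ))^2 - 1/(x+v+1)^2) := htel.tsum_eq.symm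
    _ < ∑' v : ℕ, 1/(x+(v:ℝ))^3 := by
        apply Summable.tsum_lt_tsum_of_nonneg (i := 0)
        · intro v
          have h1 := pos_shift hx v
          have h2 : (x+(v:ℝ)) ≤ x+v+1 := by linarith
          have h3 : 1/(x+(v:ℝ)+1)^2 ≤ 1/(x+(v:ℝ))^2 :=
            one_div_le_one_div_of_le (by positivity) (pow_le_pow_left₀ h1.le h2 2)
          linarith
        · exact fun v => (hstrict v).le
        · exact hstrict 0
        · exact summable_aux hx (by norm_num)

lemma ineqA {a : ℝ} (ha : 1/2 < a) :
    1/a^3 < 1/2 * (1/(a-1/2)^2 - 1/(a-1/2+1)^2) := by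
  have h1 : (0:ℝ) < a - 1/2 := by linarith
  have h2 : (0:ℝ) < a - 1/2 + 1 := by linarith
  have h3 : (0:ℝ) < a := by linarith
  rw [show (1:ℝ)/2 * (1/(a-1/2)^2 - 1/(a-1/2+1)^2) = a/((a-1/2)^2*(a-1/2+1)^2) from by
    rw [div_sub_div _ _ (by positivity) (by positivity), ← mul_div_assoc,
      div_eq_div_iff (by positivity) (by positivity)]
    ring]
  rw [div_lt_div_iff₀ (by positivity) (by positivity)]
  nlinarith [pow_pos h3 2, pow_pos h3 3, sq_nonneg a]

lemma upper_T {x : ℝ} (hx : 1/2 < x) :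
    ∑' j : ℕ, 1/(x+j)^3 < 1/(2*(x-1/2)^2) := by
  have hx2 : 0 < x - 1/2 := by linarith
  have htel : HasSum (fun j : ℕ => 1/2 * (1/((x-1/2)+j)^2 - 1/((x-1/2)+j+1)^2))
      (1/(2*(x-1/2)^2)) := by
    have h := (hasSum_tele_pow hx2 (n := 2) two_ne_zero).mul_left (1/2)
    have e : 1/(2*(x-1/2)^2) = 1/2 * (1/(x-1/2)^2) := by
      field_simp
    rw [e]; exact h
  have hstrict : ∀ j : ℕ, 1/(x+(j:ℝ))^3 < 1/2 * (1/((x-1/2)+j)^2 - 1/((x-1/2)+j+1)^2) := by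
    intro j
    have hj : (0:ℝ) ≤ j := Nat.cast_nonneg j
    have h := ineqA (a := x + j) (by linarith)
    have e1 : x + (j:ℝ) - 1/2 = (x-1/2)+j := by ring
    rw [e1] at h
    exact h
  calc ∑' j : ℕ, 1/(x+(j:ℝ))^3
      < ∑' j : ℕ, 1/2 * (1/((x-1/2)+(j:ℝ))^2 - 1/((x-1/2)+j+1)^2) := by
        apply Summable.tsum_lt_tsum_of_nonneg (i := 0)
        · intro j; have := pos_shift (by linarith : (0:ℝ) < x) j; positivity
        · exact fun j => (hstrict j).le
        · exact hstrict 0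
        · exact htel.summable
    _ = 1/(2*(x-1/2)^2) := htel.tsum_eq

lemma ineqC {c : ℝ} (hc : 0 < c) : 1/(2*(c+1/2)^2) < 1/2 * (1/c - 1/(c+1)) := by
  have h1 : (0:ℝ) < c + 1 := by linarith
  rw [show (1:ℝ)/2 * (1/c - 1/(c+1)) = 1/(2*c*(c+1)) from by field_simp; ring]
  rw [div_lt_div_iff₀ (by positivity) (by positivity)]
  nlinarith


section D
variable {y : ℝ} (hy : 0 < y)

lemma le_sq_aux (hy : 0 < y) (v : ℕ) : (v:ℝ)/(y+v)^3 ≤ 1/(y+v)^2 := by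
  have h1 := pos_shift hy v
  rw [div_le_div_iff₀ (by positivity) (by positivity)]
  have h2 : (0:ℝ) ≤ (y+v)^2 := by positivity
  nlinarith

lemma summable_D (hy : 0 < y) : Summable (fun v : ℕ => (v:ℝ)/(y+v)^3) := by
  refine Summable.of_nonneg_of_le (fun v => ?_) (le_sq_aux hy) (summable_aux hy (by norm_num))
  have := pos_shift hy v; positivity

lemma Dlt (hy : 0 < y) : ∑' v : ℕ, (v:ℝ)/(y+v)^3 < 1/(2*y) := by
  classical
  set F : ℕ → ℕ → ℝ := fun v k => if k < v then 1/(y+(v:ℝ))^3 else 0 with hF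
  have hFnn : ∀ v k, 0 ≤ F v k := by
    intro v k
    simp only [hF]
    split
    · have := pos_shift hy v; positivity
    · exact le_refl 0
  have hzero : ∀ v : ℕ, ∀ k ∉ Finset.range v, F v k = 0 := by
    intro v k hk
    exact if_neg (fun h => hk (Finset.mem_range.mpr h))
  have hrow_eq : ∀ v : ℕ, (∑' k, F v k) = (v:ℝ)/(y+v)^3 := by
    intro v
    rw [tsum_eq_sum (hzero v)]
    rw [Finset.sum_congr rfl
      (fun k hk => show F v k = 1/(y+(v:ℝ))^3 from if_pos (Finset.mem_range.mp hk))]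
    rw [Finset.sum_const, Finset.card_range, nsmul_eq_mul, mul_one_div]
  have hrow_sum : ∀ v : ℕ, Summable (F v) :=
    fun v => summable_of_ne_finset_zero (hzero v)
  have hcol_sum : ∀ k : ℕ, Summable (fun v => F v k) := by
    intro k
    apply Summable.of_nonneg_of_le (fun v => hFnn v k) ?_
      (summable_aux hy (p := 3) (by norm_num))
    intro v
    simp only [hF]
    split
    · exact le_refl _
    · have := pos_shift hy v; positivity
  have huncurry : Summable (Function.uncurry F) := by
    exact (summable_prod_of_nonneg (f := Function.uncurry F) (fun p => hFnn p.1 p.2)).2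
      ⟨hrow_sum, (summable_D hy).congr (fun v => (hrow_eq v).symm)⟩
  have hswap : ∑' v : ℕ, (v:ℝ)/(y+v)^3 = ∑' k, ∑' v, F v k := by
    calc ∑' v : ℕ, (v:ℝ)/(y+v)^3 = ∑' v, ∑' k, F v k :=
          tsum_congr (fun v => (hrow_eq v).symm)
      _ = ∑' k, ∑' v, F v k := (Summable.tsum_comm' huncurry hrow_sum hcol_sum).symm
  have hcol_lt : ∀ k : ℕ, (∑' v, F v k) < 1/2 * (1/(y+(k:ℝ)) - 1/(y+k+1)) := by
    intro k
    have hk0 : (0:ℝ) ≤ k := Nat.cast_nonneg k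
    have hx : (1:ℝ)/2 < y + (k:ℝ) + 1 := by linarith
    have hshift : (∑' v, F v k) = ∑' j : ℕ, 1/((y+(k:ℝ)+1)+j)^3 := by
      rw [← Summable.sum_add_tsum_nat_add (k+1) (hcol_sum k)]
      have e1 : ∑ i ∈ Finset.range (k+1), F i k = 0 :=
        Finset.sum_eq_zero (fun i hi =>
          if_neg (by simpa using Nat.not_lt.mpr (Nat.lt_succ_iff.mp (Finset.mem_range.mp hi))))
      rw [e1, zero_add]
      apply tsum_congr
      intro j
      have e2 : F (j + (k+1)) k = 1/(y+(↑(j+(k+1)):ℝ))^3 := if_pos (by omega)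
      rw [e2]
      push_cast
      ring_nf
    rw [hshift]
    have h1 := upper_T hx
    have h2 : 1/(2*((y+(k:ℝ)+1)-1/2)^2) = 1/(2*((y+(k:ℝ))+1/2)^2) := by ring_nf
    have h3 := ineqC (pos_shift hy k)
    calc (∑' j : ℕ, 1/((y+(k:ℝ)+1)+j)^3) < 1/(2*((y+(k:ℝ)+1)-1/2)^2) := h1
      _ = 1/(2*((y+(k:ℝ))+1/2)^2) := h2
      _ < 1/2 * (1/(y+(k:ℝ)) - 1/(y+(k:ℝ)+1)) := h3
  have hb : HasSum (fun k : ℕ => 1/2 * (1/(y+(k:ℝ)) - 1/(y+k+1))) (1/(2*y)) := by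
    have h := (hasSum_tele_pow hy (n := 1) one_ne_zero).mul_left (1/2)
    simp only [pow_one] at h
    have e : 1/(2*y) = 1/2 * (1/y) := by rw [div_mul_div_comm]; norm_num
    rw [e]
    exact h
  rw [hswap, ← hb.tsum_eq]
  apply Summable.tsum_lt_tsum_of_nonneg (i := 0)
  · exact fun k => tsum_nonneg (fun v => hFnn v k)
  · exact fun k => (hcol_lt k).le
  · exact hcol_lt 0
  · exact hb.summable
end D


noncomputable def trigamma (x : ℝ) : ℝ := ∑' v : ℕ, 1 / (x + v) ^ 2

noncomputable def tetragamma (x : ℝ) : ℝ := -2 * ∑' v : ℕ, 1 / (x + v) ^ 3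

theorem stmt_8 : ∀ y : ℝ, 0 < y →
    -(y * trigamma y) - y ^ 2 * tetragamma y > 0 := by
  intro y hy
  simp only [trigamma, tetragamma]
  have hS3sum := summable_aux hy (p := 3) (by norm_num)
  have hDsum := summable_D hy
  set S2 := ∑' v : ℕ, 1/(y+(v:ℝ))^2 with hS2def
  set S3 := ∑' v : ℕ, 1/(y+(v:ℝ))^3 with hS3def
  set D := ∑' v : ℕ, (v:ℝ)/(y+v)^3 with hDdef
  have hsplit : S2 = y * S3 + D := by
    have h1 : ∀ v : ℕ, 1/(y+(v:ℝ))^2 = y * (1/(y+(v:ℝ))^3) + (v:ℝ)/(y+v)^3 := by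
      intro v
      have hp := pos_shift hy v
      field_simp
    calc S2 = ∑' v : ℕ, (y * (1/(y+(v:ℝ))^3) + (v:ℝ)/(y+v)^3) := tsum_congr h1
      _ = y * S3 + D := by
          rw [Summable.tsum_add (hS3sum.mul_left y) hDsum, tsum_mul_left]
  have hlow : 1/(2*y^2) < S3 := lower_S3 hy
  have hD : D < 1/(2*y) := Dlt hy
  have h1 : 1/(2*y) < y * S3 := by
    calc 1/(2*y) = y * (1/(2*y^2)) := by field_simp
      _ < y * S3 := mul_lt_mul_of_pos_left hlow hy
  have h3 : 0 < y * (y * S3 - D) := mul_pos hy (by linarith)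
  rw [hsplit]
  nlinarith [h3]
end

section
/- The function x ↦ (x²·ψ₁(x) − x − 1/2)/(x·ψ₁(x) − 1) is strictly increasing on (0, ∞), where ψ₁ is the trigamma function. -/
open Real Set
open scoped ENNReal

noncomputable def pp (t : ℝ) : ℝ := Real.exp t * (t - 2) + t + 2
noncomputable def qq (t : ℝ) : ℝ := (Real.exp t - 1) * (Real.exp t - 1 - t)
noncomputable def hh (t : ℝ) : ℝ := Real.exp t / (Real.exp t - 1) ^ 3
noncomputable def nn (t : ℝ) : ℝ := hh t * pp t
noncomputable def dd (t : ℝ) : ℝ := hh t * qq t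

lemma exp_one_sub_le (t : ℝ) : Real.exp t * (1 - t) ≤ 1 := by
  have h3 : (1 - t) ≤ Real.exp (-t) := by linarith [Real.add_one_le_exp (-t)]
  have h4 : Real.exp t * (1 - t) ≤ Real.exp t * Real.exp (-t) :=
    mul_le_mul_of_nonneg_left h3 (Real.exp_pos t).le
  rwa [← Real.exp_add, add_neg_cancel, Real.exp_zero] at h4

lemma hasDerivAt_T (a1 b1 a2 b2 a3 b3 c3 k0 k1 : ℝ) (t : ℝ) :
    HasDerivAt (fun t : ℝ => (a1 + b1*t) * Real.exp t ^ 3 + (a2 + b2*t) * Real.exp t ^ 2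
      + (a3 + b3*t + c3*t^2) * Real.exp t + (k0 + k1*t))
      ((b1 + 3*a1 + 3*b1*t) * Real.exp t ^ 3 + (b2 + 2*a2 + 2*b2*t) * Real.exp t ^ 2
      + ((b3 + a3) + (2*c3 + b3)*t + c3*t^2) * Real.exp t + k1) t := by
  have he : HasDerivAt Real.exp (Real.exp t) t := Real.hasDerivAt_exp t
  have h3 : HasDerivAt (fun t => Real.exp t ^ 3) (3 * Real.exp t ^ 3) t := by
    have := he.pow 3
    exact this.congr_deriv (by norm_num; ring)
  have h2 : HasDerivAt (fun t => Real.exp t ^ 2) (2 * Real.exp t ^ 2) t := by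
    have := he.pow 2
    exact this.congr_deriv (by norm_num; ring)
  have hp1 : HasDerivAt (fun t : ℝ => a1 + b1*t) b1 t := by
    exact ((hasDerivAt_const t a1).add ((hasDerivAt_id t).const_mul b1)).congr_deriv (by simp)
  have hp2 : HasDerivAt (fun t : ℝ => a2 + b2*t) b2 t := by
    exact ((hasDerivAt_const t a2).add ((hasDerivAt_id t).const_mul b2)).congr_deriv (by simp)
  have hp3 : HasDerivAt (fun t : ℝ => a3 + b3*t + c3*t^2) (b3 + c3*(2*t)) t := by
    have hq : HasDerivAt (fun t : ℝ => t^2) (2*t) t := by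
      simpa using hasDerivAt_pow 2 t
    exact (((hasDerivAt_const t a3).add ((hasDerivAt_id t).const_mul b3)).add
      (hq.const_mul c3)).congr_deriv (by simp)
  have hp4 : HasDerivAt (fun t : ℝ => k0 + k1*t) k1 t := by
    exact ((hasDerivAt_const t k0).add ((hasDerivAt_id t).const_mul k1)).congr_deriv (by simp)
  have := (((hp1.mul h3).add (hp2.mul h2)).add (hp3.mul he)).add hp4
  exact this.congr_deriv (by ring)

lemma nonneg_of_deriv {f f' : ℝ → ℝ} (hf : ∀ t, HasDerivAt f (f' t) t) (h0 : f 0 = 0)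
    (hd : ∀ t, 0 < t → 0 ≤ f' t) : ∀ t, 0 ≤ t → 0 ≤ f t := by
  have hmono : MonotoneOn f (Ici 0) := by
    apply monotoneOn_of_deriv_nonneg (convex_Ici 0)
    · exact (continuous_iff_continuousAt.2 fun t => (hf t).differentiableAt.continuousAt).continuousOn
    · exact fun t ht => (hf t).differentiableAt.differentiableWithinAt
    · intro t ht
      rw [interior_Ici] at ht
      rw [(hf t).deriv]
      exact hd t ht
  intro t ht
  have := hmono (self_mem_Ici) ht ht
  rwa [h0] at this

lemma neg_of_deriv {f f' : ℝ → ℝ} (hf : ∀ t, HasDerivAt f (f' t) t) (h0 : f 0 = 0)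
    (hd : ∀ t, 0 < t → f' t < 0) : ∀ t, 0 < t → f t < 0 := by
  have hanti : StrictAntiOn f (Ici 0) := by
    apply strictAntiOn_of_deriv_neg (convex_Ici 0)
    · exact (continuous_iff_continuousAt.2 fun t => (hf t).differentiableAt.continuousAt).continuousOn
    · intro t ht
      rw [interior_Ici] at ht
      rw [(hf t).deriv]
      exact hd t ht
  intro t ht
  have := hanti (self_mem_Ici) (le_of_lt ht) ht
  rwa [h0] at this

lemma pos_of_deriv {f f' : ℝ → ℝ} (hf : ∀ t, HasDerivAt f (f' t) t) (h0 : f 0 = 0)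
    (hd : ∀ t, 0 < t → 0 < f' t) : ∀ t, 0 < t → 0 < f t := by
  have hmono : StrictMonoOn f (Ici 0) := by
    apply strictMonoOn_of_deriv_pos (convex_Ici 0)
    · exact (continuous_iff_continuousAt.2 fun t => (hf t).differentiableAt.continuousAt).continuousOn
    · intro t ht
      rw [interior_Ici] at ht
      rw [(hf t).deriv]
      exact hd t ht
  intro t ht
  have := hmono (self_mem_Ici) (le_of_lt ht) ht
  rwa [h0] at this

lemma exp_sub_one_pos {t : ℝ} (ht : 0 < t) : 0 < Real.exp t - 1 := by
  nlinarith [Real.add_one_lt_exp (ne_of_gt ht)]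

lemma exp_sub_one_sub_pos {t : ℝ} (ht : 0 < t) : 0 < Real.exp t - 1 - t := by
  nlinarith [Real.add_one_lt_exp (ne_of_gt ht)]

lemma qq_pos {t : ℝ} (ht : 0 < t) : 0 < qq t :=
  mul_pos (exp_sub_one_pos ht) (exp_sub_one_sub_pos ht)

lemma hh_pos {t : ℝ} (ht : 0 < t) : 0 < hh t :=
  div_pos (Real.exp_pos t) (pow_pos (exp_sub_one_pos ht) 3)

lemma dd_pos {t : ℝ} (ht : 0 < t) : 0 < dd t :=
  mul_pos (hh_pos ht) (qq_pos ht)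

lemma dd_le_one {t : ℝ} (ht : 0 < t) : dd t ≤ 1 := by
  have h1 := exp_sub_one_pos ht
  have h2 : Real.exp t * (1 - t) ≤ 1 := exp_one_sub_le t
  have h3 : dd t = Real.exp t * (Real.exp t - 1 - t) / (Real.exp t - 1) ^ 2 := by
    unfold dd hh qq
    field_simp
  rw [h3, div_le_one (by positivity)]
  nlinarith [Real.exp_pos t]

lemma W6_neg {t : ℝ} (ht : 0 < t) :
    (729 + -729*t) * Real.exp t ^ 3 + (-832 + -128*t) * Real.exp t ^ 2
      + (83 + 27*t + 2*t^2) * Real.exp t + (0 + 0*t) < 0 := by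
  have hu := Real.exp_pos t
  have hA : Real.exp t ^ 2 * (Real.exp t * (1 - t)) ≤ Real.exp t ^ 2 * 1 :=
    mul_le_mul_of_nonneg_left (exp_one_sub_le t) (sq_nonneg _)
  have hB : (103 + 128*t) * (t + 1) ≤ (103 + 128*t) * Real.exp t :=
    mul_le_mul_of_nonneg_left (Real.add_one_le_exp t) (by positivity)
  have hB' : Real.exp t * ((103 + 128*t) * (t + 1)) ≤ Real.exp t * ((103 + 128*t) * Real.exp t) :=
    mul_le_mul_of_nonneg_left hB hu.le
  have hD : 0 < Real.exp t * (20 + 204*t + 126*t^2) := by positivity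
  nlinarith [hA, hB', hD]

lemma W0_neg {t : ℝ} (ht : 0 < t) :
    (3 + -1*t) * Real.exp t ^ 3 + (-7 + -2*t) * Real.exp t ^ 2
      + (5 + 3*t + 2*t^2) * Real.exp t + (-1 + 0*t) < 0 := by
  have h5 : ∀ s : ℝ, 0 < s → (324 + -243*s) * Real.exp s ^ 3 + (-384 + -64*s) * Real.exp s ^ 2
      + (60 + 23*s + 2*s^2) * Real.exp s + (0 + 0*s) < 0 := by
    apply neg_of_deriv (f' := fun s => (729 + -729*s) * Real.exp s ^ 3
      + (-832 + -128*s) * Real.exp s ^ 2 + (83 + 27*s + 2*s^2) * Real.exp s + (0 + 0*s))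
    · intro s
      have := hasDerivAt_T 324 (-243) (-384) (-64) 60 23 2 0 0 s
      convert this using 1
      ring
    · norm_num [Real.exp_zero]
    · exact fun s hs => W6_neg hs
  have h4 : ∀ s : ℝ, 0 < s → (135 + -81*s) * Real.exp s ^ 3 + (-176 + -32*s) * Real.exp s ^ 2
      + (41 + 19*s + 2*s^2) * Real.exp s + (0 + 0*s) < 0 := by
    apply neg_of_deriv (f' := fun s => (324 + -243*s) * Real.exp s ^ 3
      + (-384 + -64*s) * Real.exp s ^ 2 + (60 + 23*s + 2*s^2) * Real.exp s + (0 + 0*s))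
    · intro s
      have := hasDerivAt_T 135 (-81) (-176) (-32) 41 19 2 0 0 s
      convert this using 1
      ring
    · norm_num [Real.exp_zero]
    · exact h5
  have h3 : ∀ s : ℝ, 0 < s → (54 + -27*s) * Real.exp s ^ 3 + (-80 + -16*s) * Real.exp s ^ 2
      + (26 + 15*s + 2*s^2) * Real.exp s + (0 + 0*s) < 0 := by
    apply neg_of_deriv (f' := fun s => (135 + -81*s) * Real.exp s ^ 3
      + (-176 + -32*s) * Real.exp s ^ 2 + (41 + 19*s + 2*s^2) * Real.exp s + (0 + 0*s))
    · intro s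
      have := hasDerivAt_T 54 (-27) (-80) (-16) 26 15 2 0 0 s
      convert this using 1
      ring
    · norm_num [Real.exp_zero]
    · exact h4
  have h2 : ∀ s : ℝ, 0 < s → (21 + -9*s) * Real.exp s ^ 3 + (-36 + -8*s) * Real.exp s ^ 2
      + (15 + 11*s + 2*s^2) * Real.exp s + (0 + 0*s) < 0 := by
    apply neg_of_deriv (f' := fun s => (54 + -27*s) * Real.exp s ^ 3
      + (-80 + -16*s) * Real.exp s ^ 2 + (26 + 15*s + 2*s^2) * Real.exp s + (0 + 0*s))
    · intro s
      have := hasDerivAt_T 21 (-9) (-36) (-8) 15 11 2 0 0 s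
      convert this using 1
      ring
    · norm_num [Real.exp_zero]
    · exact h3
  have h1 : ∀ s : ℝ, 0 < s → (8 + -3*s) * Real.exp s ^ 3 + (-16 + -4*s) * Real.exp s ^ 2
      + (8 + 7*s + 2*s^2) * Real.exp s + (0 + 0*s) < 0 := by
    apply neg_of_deriv (f' := fun s => (21 + -9*s) * Real.exp s ^ 3
      + (-36 + -8*s) * Real.exp s ^ 2 + (15 + 11*s + 2*s^2) * Real.exp s + (0 + 0*s))
    · intro s
      have := hasDerivAt_T 8 (-3) (-16) (-4) 8 7 2 0 0 s
      convert this using 1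
      ring
    · norm_num [Real.exp_zero]
    · exact h2
  have h0 : ∀ s : ℝ, 0 < s → (3 + -1*s) * Real.exp s ^ 3 + (-7 + -2*s) * Real.exp s ^ 2
      + (5 + 3*s + 2*s^2) * Real.exp s + (-1 + 0*s) < 0 := by
    apply neg_of_deriv (f' := fun s => (8 + -3*s) * Real.exp s ^ 3
      + (-16 + -4*s) * Real.exp s ^ 2 + (8 + 7*s + 2*s^2) * Real.exp s + (0 + 0*s))
    · intro s
      have := hasDerivAt_T 3 (-1) (-7) (-2) 5 3 2 (-1) 0 s
      convert this using 1
      ring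
    · norm_num [Real.exp_zero]
    · exact h1
  exact h0 t ht

lemma pp_nonneg {t : ℝ} (ht : 0 ≤ t) : 0 ≤ pp t := by
  have h : ∀ s : ℝ, 0 ≤ s → 0 ≤ (0 + 0*s) * Real.exp s ^ 3 + (0 + 0*s) * Real.exp s ^ 2
      + (-2 + 1*s + 0*s^2) * Real.exp s + (2 + 1*s) := by
    apply nonneg_of_deriv (f' := fun s => (0 + 0*s) * Real.exp s ^ 3
      + (0 + 0*s) * Real.exp s ^ 2 + (-1 + 1*s + 0*s^2) * Real.exp s + (1 + 0*s))
    · intro s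
      have := hasDerivAt_T 0 0 0 0 (-2) 1 0 2 1 s
      convert this using 1
      ring
    · norm_num [Real.exp_zero]
    · intro s hs
      have := exp_one_sub_le s
      nlinarith
  have h2 := h t ht
  unfold pp
  nlinarith [h2]

lemma phi3_pos : ∀ s : ℝ, 0 < s → (0:ℝ) ≤ (27 + 0*s) * Real.exp s ^ 3 + (-20 + -8*s) * Real.exp s ^ 2
    + (-2 + -1*s + 0*s^2) * Real.exp s + (0 + 0*s) := by
  intro s hs
  have hu := Real.exp_pos s
  have hadd : s + 1 ≤ Real.exp s := Real.add_one_le_exp s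
  have H1 : Real.exp s ^ 2 * (s + 1) ≤ Real.exp s ^ 2 * Real.exp s :=
    mul_le_mul_of_nonneg_left hadd (sq_nonneg _)
  have H2 : (Real.exp s * (7 + 19*s)) * (s + 1) ≤ (Real.exp s * (7 + 19*s)) * Real.exp s :=
    mul_le_mul_of_nonneg_left hadd (by positivity)
  nlinarith [H1, H2, mul_pos hu (show (0:ℝ) < 5 + 25*s by linarith)]

lemma cube_ineq {t : ℝ} (ht : 0 ≤ t) : Real.exp t * pp t ≤ (Real.exp t - 1) ^ 3 := by
  have h2 : ∀ s : ℝ, 0 ≤ s → (0:ℝ) ≤ (9 + 0*s) * Real.exp s ^ 3 + (-8 + -4*s) * Real.exp s ^ 2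
      + (-1 + -1*s + 0*s^2) * Real.exp s + (0 + 0*s) := by
    apply nonneg_of_deriv (f' := fun s => (27 + 0*s) * Real.exp s ^ 3
      + (-20 + -8*s) * Real.exp s ^ 2 + (-2 + -1*s + 0*s^2) * Real.exp s + (0 + 0*s))
    · intro s
      have := hasDerivAt_T 9 0 (-8) (-4) (-1) (-1) 0 0 0 s
      convert this using 1
      ring
    · norm_num [Real.exp_zero]
    · exact phi3_pos
  have h1 : ∀ s : ℝ, 0 ≤ s → (0:ℝ) ≤ (3 + 0*s) * Real.exp s ^ 3 + (-3 + -2*s) * Real.exp s ^ 2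
      + (0 + -1*s + 0*s^2) * Real.exp s + (0 + 0*s) := by
    apply nonneg_of_deriv (f' := fun s => (9 + 0*s) * Real.exp s ^ 3
      + (-8 + -4*s) * Real.exp s ^ 2 + (-1 + -1*s + 0*s^2) * Real.exp s + (0 + 0*s))
    · intro s
      have := hasDerivAt_T 3 0 (-3) (-2) 0 (-1) 0 0 0 s
      convert this using 1
      ring
    · norm_num [Real.exp_zero]
    · exact fun s hs => h2 s hs.le
  have h0 : ∀ s : ℝ, 0 ≤ s → (0:ℝ) ≤ (1 + 0*s) * Real.exp s ^ 3 + (-1 + -1*s) * Real.exp s ^ 2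
      + (1 + -1*s + 0*s^2) * Real.exp s + (-1 + 0*s) := by
    apply nonneg_of_deriv (f' := fun s => (3 + 0*s) * Real.exp s ^ 3
      + (-3 + -2*s) * Real.exp s ^ 2 + (0 + -1*s + 0*s^2) * Real.exp s + (0 + 0*s))
    · intro s
      have := hasDerivAt_T 1 0 (-1) (-1) 1 (-1) 0 (-1) 0 s
      convert this using 1
      ring
    · norm_num [Real.exp_zero]
    · exact fun s hs => h1 s hs.le
  have := h0 t ht
  unfold pp
  nlinarith [this]

lemma nn_nonneg {t : ℝ} (ht : 0 < t) : 0 ≤ nn t :=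
  mul_nonneg (hh_pos ht).le (pp_nonneg ht.le)

lemma nn_le_one {t : ℝ} (ht : 0 < t) : nn t ≤ 1 := by
  have h : nn t = Real.exp t * pp t / (Real.exp t - 1) ^ 3 := by
    unfold nn hh
    ring
  rw [h, div_le_one (pow_pos (exp_sub_one_pos ht) 3)]
  exact cube_ineq ht.le

lemma hasDerivAt_pp (t : ℝ) : HasDerivAt pp ((t-1)*Real.exp t + 1) t := by
  have h := hasDerivAt_T 0 0 0 0 (-2) 1 0 2 1 t
  have hfun : (fun s : ℝ => (0 + 0*s) * Real.exp s ^ 3 + (0 + 0*s) * Real.exp s ^ 2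
      + (-2 + 1*s + 0*s^2) * Real.exp s + (2 + 1*s)) = pp := by
    funext s
    unfold pp
    ring
  rw [hfun] at h
  convert h using 1
  ring

lemma hasDerivAt_qq (t : ℝ) :
    HasDerivAt qq (2*Real.exp t^2 - (3+t)*Real.exp t + 1) t := by
  have h := hasDerivAt_T 0 0 1 0 (-2) (-1) 0 1 1 t
  have hfun : (fun s : ℝ => (0 + 0*s) * Real.exp s ^ 3 + (1 + 0*s) * Real.exp s ^ 2
      + (-2 + -1*s + 0*s^2) * Real.exp s + (1 + 1*s)) = qq := by
    funext s
    unfold qq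
    ring
  rw [hfun] at h
  convert h using 1
  ring

lemma ratio_strictAnti : StrictAntiOn (fun t => pp t / qq t) (Ioi (0:ℝ)) := by
  have hderiv : ∀ t ∈ Ioi (0:ℝ), HasDerivAt (fun t => pp t / qq t)
      ((((t-1)*Real.exp t + 1) * qq t - pp t * (2*Real.exp t^2 - (3+t)*Real.exp t + 1)) / (qq t)^2) t :=
    fun t ht => (hasDerivAt_pp t).div (hasDerivAt_qq t) (ne_of_gt (qq_pos ht))
  apply strictAntiOn_of_deriv_neg (convex_Ioi 0)
  · intro t ht
    exact (hderiv t ht).continuousAt.continuousWithinAt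
  · intro t ht
    rw [interior_Ioi] at ht
    rw [(hderiv t ht).deriv]
    apply div_neg_of_neg_of_pos
    · have hW := W0_neg ht
      have heq : ((t-1)*Real.exp t + 1) * qq t - pp t * (2*Real.exp t^2 - (3+t)*Real.exp t + 1)
          = (3 + -1*t) * Real.exp t ^ 3 + (-7 + -2*t) * Real.exp t ^ 2
            + (5 + 3*t + 2*t^2) * Real.exp t + (-1 + 0*t) := by
        unfold pp qq
        ring
      linarith [heq ▸ hW]
    · exact pow_pos (qq_pos ht) 2

lemma cross_lt {s t : ℝ} (hs : 0 < s) (hst : s < t) : nn t * dd s < nn s * dd t := by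
  have ht : 0 < t := hs.trans hst
  have h := ratio_strictAnti (mem_Ioi.2 hs) (mem_Ioi.2 ht) hst
  rw [div_lt_div_iff₀ (qq_pos ht) (qq_pos hs)] at h
  have h1 := hh_pos hs
  have h2 := hh_pos ht
  unfold nn dd
  calc hh t * pp t * (hh s * qq s) = (hh s * hh t) * (pp t * qq s) := by ring
    _ < (hh s * hh t) * (pp s * qq t) := by
        apply mul_lt_mul_of_pos_left h (by positivity)
    _ = hh s * pp s * (hh t * qq t) := by ring

lemma summable_trigamma {x : ℝ} (hx : 0 < x) :
    Summable (fun v : ℕ => 1 / (x + v) ^ 2) := by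
  rw [← summable_nat_add_iff 1]
  have hbase : Summable (fun v : ℕ => 1 / ((v:ℝ) + 1) ^ 2) := by
    have := Real.summable_one_div_nat_pow.2 (le_refl 2)
    rw [← summable_nat_add_iff 1] at this
    exact_mod_cast this
  apply Summable.of_nonneg_of_le (fun v => by positivity) _ hbase
  intro v
  apply one_div_le_one_div_of_le (by positivity)
  apply pow_le_pow_left₀ (by positivity)
  push_cast
  linarith

lemma telescope_hasSum {x : ℝ} (hx : 0 < x) :
    HasSum (fun v : ℕ => 1 / (x + v) - 1 / (x + v + 1)) (1 / x) := by
  have hsum : Summable (fun v : ℕ => 1 / (x + v) - 1 / (x + v + 1)) := by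
    apply Summable.of_nonneg_of_le _ _ (summable_trigamma hx)
    · intro v
      have h1 : (0:ℝ) < x + v := by positivity
      have h2 : (0:ℝ) < x + v + 1 := by linarith
      rw [sub_nonneg]
      apply one_div_le_one_div_of_le h1
      linarith
    · intro v
      have h1 : (0:ℝ) < x + v := by positivity
      have h2 : (0:ℝ) < x + v + 1 := by linarith
      rw [div_sub_div _ _ (ne_of_gt h1) (ne_of_gt h2)]
      have : (1:ℝ) * (x + v + 1) - (x + v) * 1 = 1 := by ring
      rw [this]
      rw [div_le_div_iff₀ (by positivity) (by positivity)]
      nlinarith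
  rw [hsum.hasSum_iff_tendsto_nat]
  have hps : ∀ n : ℕ, ∑ v ∈ Finset.range n, (1 / (x + v) - 1 / (x + v + 1))
      = 1 / x - 1 / (x + n) := by
    intro n
    calc ∑ v ∈ Finset.range n, (1 / (x + v) - 1 / (x + v + 1))
        = ∑ v ∈ Finset.range n, (1 / (x + (v:ℝ)) - 1 / (x + ((v+1:ℕ):ℝ))) := by
          apply Finset.sum_congr rfl
          intro v _
          push_cast
          ring_nf
      _ = 1 / (x + ((0:ℕ):ℝ)) - 1 / (x + n) :=
          Finset.sum_range_sub' (f := fun v : ℕ => 1 / (x + (v:ℝ))) n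
      _ = 1 / x - 1 / (x + n) := by norm_num
  simp only [hps]
  have hto : Filter.Tendsto (fun n : ℕ => x + (n:ℝ)) Filter.atTop Filter.atTop :=
    Filter.tendsto_atTop_add_const_left _ _ tendsto_natCast_atTop_atTop
  have hz := hto.inv_tendsto_atTop
  simp only [one_div]
  simpa using (tendsto_const_nhds (x := x⁻¹)).sub hz

lemma trigamma_hasSum {x : ℝ} (hx : 0 < x) :
    HasSum (fun v : ℕ => 1 / (x + v) ^ 2) (trigamma x) :=
  (summable_trigamma hx).hasSum

lemma shift1 {x : ℝ} (hx : 0 < x) :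
    HasSum (fun v : ℕ => 1 / (x + v + 1) ^ 2) (trigamma x - 1 / x ^ 2) := by
  have h : HasSum (fun v : ℕ => 1 / (x + ((v + 1 : ℕ) : ℝ)) ^ 2) (trigamma x - 1 / x ^ 2) := by
    rw [hasSum_nat_add_iff (f := fun v : ℕ => 1 / (x + (v : ℝ)) ^ 2) 1]
    have : trigamma x - 1 / x ^ 2 + ∑ i ∈ Finset.range 1, 1 / (x + (i : ℝ)) ^ 2
        = trigamma x := by
      simp
    rw [this]
    exact trigamma_hasSum hx
  convert h using 2 with v
  push_cast
  ring

lemma shift2 {x : ℝ} (hx : 0 < x) :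
    HasSum (fun v : ℕ => 1 / (x + v + 2) ^ 2)
      (trigamma x - 1 / x ^ 2 - 1 / (x + 1) ^ 2) := by
  have h : HasSum (fun v : ℕ => 1 / (x + ((v + 2 : ℕ) : ℝ)) ^ 2)
      (trigamma x - 1 / x ^ 2 - 1 / (x + 1) ^ 2) := by
    rw [hasSum_nat_add_iff (f := fun v : ℕ => 1 / (x + (v : ℝ)) ^ 2) 2]
    have : trigamma x - 1 / x ^ 2 - 1 / (x + 1) ^ 2
        + ∑ i ∈ Finset.range 2, 1 / (x + (i : ℝ)) ^ 2 = trigamma x := by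
      rw [Finset.sum_range_succ, Finset.sum_range_one]
      push_cast
      ring
    rw [this]
    exact trigamma_hasSum hx
  convert h using 2 with v
  push_cast
  ring

lemma tel1 {x : ℝ} (hx : 0 < x) :
    HasSum (fun v : ℕ => 1 / (x + v + 1) - 1 / (x + v + 2)) (1 / (x + 1)) := by
  have h := telescope_hasSum (x := x + 1) (by linarith)
  convert h using 2 with v
  ring

lemma D_hasSum {x : ℝ} (hx : 0 < x) :
    HasSum (fun v : ℕ => ((v : ℝ) + 1) / ((x + v) * (x + v + 1) ^ 2))
      (x * trigamma x - 1) := by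
  have h3 := ((telescope_hasSum hx).mul_left (1 - x)).add ((shift1 hx).mul_left x)
  have hfun : (fun v : ℕ => (1 - x) * (1 / (x + v) - 1 / (x + v + 1))
      + x * (1 / (x + v + 1) ^ 2))
      = (fun v : ℕ => ((v : ℝ) + 1) / ((x + v) * (x + v + 1) ^ 2)) := by
    funext v
    have hv1 : (0:ℝ) < x + v := by positivity
    have hv2 : (0:ℝ) < x + v + 1 := by linarith
    field_simp
    ring
  rw [hfun] at h3
  convert h3 using 1
  · rfl
  field_simp
  ring

lemma N_hasSum {x : ℝ} (hx : 0 < x) :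
    HasSum (fun v : ℕ => ((v : ℝ) + 1) * ((v : ℝ) + 2) / (2 * (x + v + 1) ^ 2 * (x + v + 2) ^ 2))
      (x ^ 2 * trigamma x - x - 1 / 2) := by
  have h := ((((shift2 hx).mul_left (x^2 + x)).add ((shift1 hx).mul_left (x^2 - x))).add
    ((tel1 hx).mul_left (1 - 2*x^2))).mul_left (1/2)
  have hfun : (fun v : ℕ => 1/2 * ((x^2 + x) * (1 / (x + v + 2) ^ 2)
      + (x^2 - x) * (1 / (x + v + 1) ^ 2)
      + (1 - 2*x^2) * (1 / (x + v + 1) - 1 / (x + v + 2))))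
      = (fun v : ℕ => ((v : ℝ) + 1) * ((v : ℝ) + 2) / (2 * (x + v + 1) ^ 2 * (x + v + 2) ^ 2)) := by
    funext v
    have hv1 : (0:ℝ) < x + v + 1 := by positivity
    have hv2 : (0:ℝ) < x + v + 2 := by positivity
    field_simp
    ring
  rw [hfun] at h
  convert h using 1
  · rfl
  have hx1 : x + 1 ≠ 0 := by positivity
  field_simp
  ring

lemma D_pos {x : ℝ} (hx : 0 < x) : 0 < x * trigamma x - 1 := by
  have h := D_hasSum hx
  have hle := le_hasSum h 0 (fun j _ => by positivity)
  have h0 : (0:ℝ) < (((0:ℕ) : ℝ) + 1) / ((x + (0:ℕ)) * (x + (0:ℕ) + 1) ^ 2) := by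
    push_cast
    positivity
  linarith

open MeasureTheory

lemma integral_exp_neg_mul {c : ℝ} (hc : 0 < c) :
    ∫ t in Ioi (0:ℝ), Real.exp (-(c * t)) = 1 / c := by
  have h := Real.integral_rpow_mul_exp_neg_mul_Ioi (a := 1) one_pos hc
  simp only [sub_self, Real.rpow_zero, one_mul, Real.Gamma_one, Real.rpow_one, mul_one] at h
  exact h

lemma integral_mul_exp_neg_mul {c : ℝ} (hc : 0 < c) :
    ∫ t in Ioi (0:ℝ), t * Real.exp (-(c * t)) = 1 / c ^ 2 := by
  have h := Real.integral_rpow_mul_exp_neg_mul_Ioi (a := 2) two_pos hc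
  have h1 : ((2:ℝ) - 1) = 1 := by norm_num
  rw [h1] at h
  simp only [Real.rpow_one, Real.Gamma_two, mul_one] at h
  rw [h]
  rw [show ((2:ℝ) = ((2:ℕ):ℝ)) from by norm_num, Real.rpow_natCast]
  ring

lemma integrableOn_exp_neg_mul {c : ℝ} (hc : 0 < c) :
    IntegrableOn (fun t => Real.exp (-(c * t))) (Ioi (0:ℝ)) := by
  have := exp_neg_integrableOn_Ioi 0 hc
  simpa [neg_mul] using this

lemma integrableOn_mul_exp_neg_mul {c : ℝ} (hc : 0 < c) :
    IntegrableOn (fun t => t * Real.exp (-(c * t))) (Ioi (0:ℝ)) := by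
  have hg : IntegrableOn (fun t => (2/c) * Real.exp (-(c/2 * t))) (Ioi (0:ℝ)) :=
    (integrableOn_exp_neg_mul (by linarith)).const_mul _
  apply Integrable.mono' hg
  · exact (continuous_id.mul (Real.continuous_exp.comp (by continuity))).aestronglyMeasurable
  · rw [ae_restrict_iff' measurableSet_Ioi]
    apply Filter.Eventually.of_forall
    intro t ht
    rw [mem_Ioi] at ht
    rw [Real.norm_eq_abs, abs_of_nonneg (by positivity)]
    have key : c/2 * t ≤ Real.exp (c/2 * t) := by
      linarith [Real.add_one_le_exp (c/2 * t)]
    have ht2 : t ≤ (2/c) * Real.exp (c/2*t) := by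
      have h3 := mul_le_mul_of_nonneg_left key (show (0:ℝ) ≤ 2/c by positivity)
      have h4 : (2/c) * (c/2*t) = t := by
        field_simp
      linarith
    calc t * Real.exp (-(c*t)) ≤ ((2/c) * Real.exp (c/2*t)) * Real.exp (-(c*t)) :=
        mul_le_mul_of_nonneg_right ht2 (Real.exp_pos _).le
      _ = (2/c) * Real.exp (-(c/2*t)) := by
          rw [mul_assoc, ← Real.exp_add]
          have harg : c/2*t + -(c*t) = -(c/2*t) := by ring
          rw [harg]

lemma dd_continuousOn : ContinuousOn dd (Ioi (0:ℝ)) := by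
  unfold dd hh qq
  apply ContinuousOn.mul
  · apply ContinuousOn.div
    · exact Real.continuous_exp.continuousOn
    · exact (by continuity : Continuous (fun x : ℝ => (Real.exp x - 1) ^ 3)).continuousOn
    · intro t ht
      exact ne_of_gt (pow_pos (exp_sub_one_pos ht) 3)
  · exact (by continuity : Continuous (fun x : ℝ => (Real.exp x - 1) * (Real.exp x - 1 - x))).continuousOn

lemma nn_continuousOn : ContinuousOn nn (Ioi (0:ℝ)) := by
  unfold nn hh pp
  apply ContinuousOn.mul
  · apply ContinuousOn.div
    · exact Real.continuous_exp.continuousOn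
    · exact (by continuity : Continuous (fun x : ℝ => (Real.exp x - 1) ^ 3)).continuousOn
    · intro t ht
      exact ne_of_gt (pow_pos (exp_sub_one_pos ht) 3)
  · exact (by continuity : Continuous (fun x : ℝ => Real.exp x * (x - 2) + x + 2)).continuousOn

lemma D_integrable {x : ℝ} (hx : 0 < x) :
    IntegrableOn (fun t => dd t * Real.exp (-(x * t))) (Ioi (0:ℝ)) := by
  apply Integrable.mono' (integrableOn_exp_neg_mul hx)
  · exact (dd_continuousOn.mul (Real.continuous_exp.comp (by continuity)).continuousOn).aestronglyMeasurable
      measurableSet_Ioi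
  · rw [ae_restrict_iff' measurableSet_Ioi]
    apply Filter.Eventually.of_forall
    intro t ht
    rw [mem_Ioi] at ht
    rw [Real.norm_eq_abs, abs_of_nonneg (mul_nonneg (dd_pos ht).le (Real.exp_pos _).le)]
    calc dd t * Real.exp (-(x*t)) ≤ 1 * Real.exp (-(x*t)) :=
        mul_le_mul_of_nonneg_right (dd_le_one ht) (Real.exp_pos _).le
      _ = Real.exp (-(x*t)) := one_mul _

lemma N_integrable {x : ℝ} (hx : 0 < x) :
    IntegrableOn (fun t => nn t * Real.exp (-(x * t))) (Ioi (0:ℝ)) := by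
  apply Integrable.mono' (integrableOn_exp_neg_mul hx)
  · exact (nn_continuousOn.mul (Real.continuous_exp.comp (by continuity)).continuousOn).aestronglyMeasurable
      measurableSet_Ioi
  · rw [ae_restrict_iff' measurableSet_Ioi]
    apply Filter.Eventually.of_forall
    intro t ht
    rw [mem_Ioi] at ht
    rw [Real.norm_eq_abs, abs_of_nonneg (mul_nonneg (nn_nonneg ht) (Real.exp_pos _).le)]
    calc nn t * Real.exp (-(x*t)) ≤ 1 * Real.exp (-(x*t)) :=
        mul_le_mul_of_nonneg_right (nn_le_one ht) (Real.exp_pos _).le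
      _ = Real.exp (-(x*t)) := one_mul _

lemma D_summand_integral {x : ℝ} (hx : 0 < x) (v : ℕ) :
    ∫ t in Ioi (0:ℝ), ((v:ℝ)+1) * ((Real.exp t - 1 - t) * Real.exp (-((x+v+1) * t)))
      = ((v:ℝ)+1) / ((x+v) * (x+v+1)^2) := by
  have hc1 : (0:ℝ) < x + v := by positivity
  have hc2 : (0:ℝ) < x + v + 1 := by linarith
  have hpt : ∀ t : ℝ, (Real.exp t - 1 - t) * Real.exp (-((x+v+1) * t))
      = Real.exp (-((x+v) * t)) - Real.exp (-((x+v+1) * t)) - t * Real.exp (-((x+v+1) * t)) := by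
    intro t
    have he : Real.exp t * Real.exp (-((x+v+1)*t)) = Real.exp (-((x+v)*t)) := by
      rw [← Real.exp_add]
      congr 1
      ring
    calc (Real.exp t - 1 - t) * Real.exp (-((x+v+1)*t))
        = Real.exp t * Real.exp (-((x+v+1)*t)) - Real.exp (-((x+v+1)*t))
          - t * Real.exp (-((x+v+1)*t)) := by ring
      _ = _ := by rw [he]
  simp only [hpt]
  rw [integral_const_mul]
  have e1 : ∫ t in Ioi (0:ℝ), (Real.exp (-((x+(v:ℝ))*t)) - Real.exp (-((x+(v:ℝ)+1)*t))
        - t*Real.exp (-((x+(v:ℝ)+1)*t)))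
      = (∫ t in Ioi (0:ℝ), (Real.exp (-((x+(v:ℝ))*t)) - Real.exp (-((x+(v:ℝ)+1)*t))))
        - ∫ t in Ioi (0:ℝ), t*Real.exp (-((x+(v:ℝ)+1)*t)) := by
    apply integral_sub ?_ (integrableOn_mul_exp_neg_mul hc2)
    exact (integrableOn_exp_neg_mul hc1).sub (integrableOn_exp_neg_mul hc2)
  have e2 : ∫ t in Ioi (0:ℝ), (Real.exp (-((x+(v:ℝ))*t)) - Real.exp (-((x+(v:ℝ)+1)*t)))
      = (∫ t in Ioi (0:ℝ), Real.exp (-((x+(v:ℝ))*t)))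
        - ∫ t in Ioi (0:ℝ), Real.exp (-((x+(v:ℝ)+1)*t)) := by
    exact integral_sub (integrableOn_exp_neg_mul hc1) (integrableOn_exp_neg_mul hc2)
  rw [e1, e2, integral_exp_neg_mul hc1, integral_exp_neg_mul hc2, integral_mul_exp_neg_mul hc2]
  field_simp
  ring

lemma D_pointwise {x : ℝ} {t : ℝ} (ht : 0 < t) :
    HasSum (fun v : ℕ => ((v:ℝ)+1) * ((Real.exp t - 1 - t) * Real.exp (-((x+v+1) * t))))
      (dd t * Real.exp (-(x * t))) := by
  have hr0 : 0 < Real.exp (-t) := Real.exp_pos _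
  have hr1 : Real.exp (-t) < 1 := Real.exp_lt_one_iff.2 (by linarith)
  have hnorm : ‖Real.exp (-t)‖ < 1 := by
    rw [Real.norm_eq_abs, abs_of_pos hr0]
    exact hr1
  have hgeo := hasSum_choose_mul_geometric_of_norm_lt_one 1 hnorm
  have hgeo' : HasSum (fun n : ℕ => ((n:ℝ)+1) * Real.exp (-t) ^ n)
      (1/(1 - Real.exp (-t))^2) := by
    convert hgeo using 2 with n
    · rfl
    rw [Nat.choose_one_right]
    push_cast
    ring
  have h := hgeo'.mul_left ((Real.exp t - 1 - t) * Real.exp (-((x+1)*t)))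
  have hu1 : Real.exp t - 1 ≠ 0 := ne_of_gt (exp_sub_one_pos ht)
  have hu : Real.exp t ≠ 0 := (Real.exp_pos t).ne'
  have hx1 : Real.exp (-((x+1)*t)) = Real.exp (-(x*t)) * (Real.exp t)⁻¹ := by
    rw [← Real.exp_neg t, ← Real.exp_add]
    congr 1
    ring
  have hfun : (fun v : ℕ => (Real.exp t - 1 - t) * Real.exp (-((x+1)*t))
      * (((v:ℝ)+1) * Real.exp (-t) ^ v))
      = (fun v : ℕ => ((v:ℝ)+1) * ((Real.exp t - 1 - t) * Real.exp (-((x+v+1) * t)))) := by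
    funext v
    have hsplit : Real.exp (-((x+v+1)*t)) = Real.exp (-((x+1)*t)) * Real.exp (-t)^v := by
      rw [← Real.exp_nat_mul, ← Real.exp_add]
      congr 1
      push_cast
      ring
    rw [hsplit]
    ring
  have hval : (Real.exp t - 1 - t) * Real.exp (-((x+1)*t)) * (1/(1 - Real.exp (-t))^2)
      = dd t * Real.exp (-(x * t)) := by
    rw [hx1, Real.exp_neg t]
    unfold dd hh qq
    field_simp
  rw [hfun, hval] at h
  exact h

lemma D_integral {x : ℝ} (hx : 0 < x) :
    ∫ t in Ioi (0:ℝ), dd t * Real.exp (-(x * t)) = x * trigamma x - 1 := by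
  set μ := volume.restrict (Ioi (0:ℝ)) with hμ
  set f : ℕ → ℝ → ℝ :=
    fun v t => ((v:ℝ)+1) * ((Real.exp t - 1 - t) * Real.exp (-((x+v+1) * t))) with hf
  have hc2 : ∀ v : ℕ, (0:ℝ) < x + v + 1 := fun v => by positivity
  have hcont : ∀ v : ℕ, Continuous (f v) := by
    intro v
    apply Continuous.mul continuous_const
    apply Continuous.mul
    · continuity
    · exact Real.continuous_exp.comp (by continuity)
  have hmeas : ∀ v : ℕ, AEStronglyMeasurable (f v) μ := fun v => (hcont v).aestronglyMeasurable
  have hint : ∀ v : ℕ, IntegrableOn (f v) (Ioi (0:ℝ)) := by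
    intro v
    have hc1 : (0:ℝ) < x + v := by positivity
    have : IntegrableOn (fun t : ℝ => Real.exp (-((x+(v:ℝ))*t)) - Real.exp (-((x+(v:ℝ)+1)*t))
        - t*Real.exp (-((x+(v:ℝ)+1)*t))) (Ioi (0:ℝ)) :=
      ((integrableOn_exp_neg_mul hc1).sub (integrableOn_exp_neg_mul (hc2 v))).sub
        (integrableOn_mul_exp_neg_mul (hc2 v))
    have heq : (fun t : ℝ => Real.exp (-((x+(v:ℝ))*t)) - Real.exp (-((x+(v:ℝ)+1)*t))
        - t*Real.exp (-((x+(v:ℝ)+1)*t))) = fun t => (Real.exp t - 1 - t) * Real.exp (-((x+v+1) * t)) := by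
      funext t
      have he : Real.exp t * Real.exp (-((x+(v:ℝ)+1)*t)) = Real.exp (-((x+(v:ℝ))*t)) := by
        rw [← Real.exp_add]
        congr 1
        ring
      calc Real.exp (-((x+(v:ℝ))*t)) - Real.exp (-((x+(v:ℝ)+1)*t)) - t*Real.exp (-((x+(v:ℝ)+1)*t))
          = Real.exp t * Real.exp (-((x+(v:ℝ)+1)*t)) - Real.exp (-((x+(v:ℝ)+1)*t))
            - t*Real.exp (-((x+(v:ℝ)+1)*t)) := by rw [he]
        _ = (Real.exp t - 1 - t) * Real.exp (-((x+(v:ℝ)+1) * t)) := by ring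
    rw [heq] at this
    exact this.const_mul _
  have hnonneg : ∀ v : ℕ, ∀ t ∈ Ioi (0:ℝ), 0 ≤ f v t := by
    intro v t ht
    rw [mem_Ioi] at ht
    have := exp_sub_one_sub_pos ht
    have := Real.exp_pos (-((x+(v:ℝ)+1) * t))
    positivity
  have hnonneg' : ∀ v : ℕ, 0 ≤ᵐ[μ] f v := by
    intro v
    filter_upwards [ae_restrict_mem measurableSet_Ioi] with t ht
    exact hnonneg v t ht
  have hval : ∀ v : ℕ, ∫ t, f v t ∂μ = ((v:ℝ)+1) / ((x+v) * (x+v+1)^2) :=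
    fun v => D_summand_integral hx v
  have hlint : ∀ v : ℕ, ∫⁻ t, ‖f v t‖₊ ∂μ = ENNReal.ofReal (((v:ℝ)+1) / ((x+v) * (x+v+1)^2)) := by
    intro v
    rw [← hval v, ofReal_integral_eq_lintegral_ofReal (hint v) (hnonneg' v)]
    apply lintegral_congr_ae
    filter_upwards [hnonneg' v] with t h1
    rw [← Real.enorm_eq_ofReal h1]
    exact (enorm_eq_nnnorm _).symm
  have hsum : Summable (fun v : ℕ => ((v:ℝ)+1) / ((x+v) * (x+v+1)^2)) := (D_hasSum hx).summable
  have hfin : ∑' v : ℕ, ∫⁻ t, ‖f v t‖₊ ∂μ ≠ ⊤ := by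
    simp only [hlint]
    rw [← ENNReal.ofReal_tsum_of_nonneg (fun v => by positivity) hsum]
    exact ENNReal.ofReal_ne_top
  have hcongr : ∀ t ∈ Ioi (0:ℝ), dd t * Real.exp (-(x * t)) = ∑' v : ℕ, f v t :=
    fun t ht => (D_pointwise (mem_Ioi.1 ht)).tsum_eq.symm
  calc ∫ t in Ioi (0:ℝ), dd t * Real.exp (-(x * t))
      = ∫ t in Ioi (0:ℝ), ∑' v : ℕ, f v t := setIntegral_congr_fun measurableSet_Ioi hcongr
    _ = ∑' v : ℕ, ∫ t, f v t ∂μ := integral_tsum hmeas hfin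
    _ = ∑' v : ℕ, ((v:ℝ)+1) / ((x+v) * (x+v+1)^2) := tsum_congr hval
    _ = x * trigamma x - 1 := (D_hasSum hx).tsum_eq

lemma N_summand_integral {x : ℝ} (hx : 0 < x) (m : ℕ) :
    ∫ t in Ioi (0:ℝ), (((m:ℝ)+1) * ((m:ℝ)+2) / 2) * (pp t * Real.exp (-((x+m+2) * t)))
      = ((m:ℝ)+1) * ((m:ℝ)+2) / (2 * (x+m+1)^2 * (x+m+2)^2) := by
  have ha : (0:ℝ) < x + m + 1 := by positivity
  have hb : (0:ℝ) < x + m + 2 := by linarith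
  have hpt : (fun t : ℝ => pp t * Real.exp (-((x+(m:ℝ)+2) * t)))
      = fun t : ℝ => (t * Real.exp (-((x+(m:ℝ)+1)*t)) - 2 * Real.exp (-((x+(m:ℝ)+1)*t)))
        + (t * Real.exp (-((x+(m:ℝ)+2)*t)) + 2 * Real.exp (-((x+(m:ℝ)+2)*t))) := by
    funext t
    have he : Real.exp t * Real.exp (-((x+(m:ℝ)+2)*t)) = Real.exp (-((x+(m:ℝ)+1)*t)) := by
      rw [← Real.exp_add]
      congr 1
      ring
    unfold pp
    calc (Real.exp t * (t - 2) + t + 2) * Real.exp (-((x+(m:ℝ)+2) * t))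
        = (t - 2) * (Real.exp t * Real.exp (-((x+(m:ℝ)+2)*t)))
          + (t + 2) * Real.exp (-((x+(m:ℝ)+2) * t)) := by ring
      _ = (t - 2) * Real.exp (-((x+(m:ℝ)+1)*t)) + (t + 2) * Real.exp (-((x+(m:ℝ)+2) * t)) := by
          rw [he]
      _ = _ := by ring
  rw [integral_const_mul, hpt]
  have i1 : IntegrableOn (fun t : ℝ => t * Real.exp (-((x+(m:ℝ)+1)*t))
      - 2 * Real.exp (-((x+(m:ℝ)+1)*t))) (Ioi (0:ℝ)) :=
    (integrableOn_mul_exp_neg_mul ha).sub ((integrableOn_exp_neg_mul ha).const_mul 2)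
  have i2 : IntegrableOn (fun t : ℝ => t * Real.exp (-((x+(m:ℝ)+2)*t))
      + 2 * Real.exp (-((x+(m:ℝ)+2)*t))) (Ioi (0:ℝ)) :=
    (integrableOn_mul_exp_neg_mul hb).add ((integrableOn_exp_neg_mul hb).const_mul 2)
  rw [integral_add i1 i2,
    integral_sub (integrableOn_mul_exp_neg_mul ha) ((integrableOn_exp_neg_mul ha).const_mul 2),
    integral_add (integrableOn_mul_exp_neg_mul hb) ((integrableOn_exp_neg_mul hb).const_mul 2),
    integral_const_mul, integral_const_mul,
    integral_mul_exp_neg_mul ha, integral_mul_exp_neg_mul hb,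
    integral_exp_neg_mul ha, integral_exp_neg_mul hb]
  field_simp
  ring

lemma N_pointwise {x : ℝ} {t : ℝ} (ht : 0 < t) :
    HasSum (fun m : ℕ => (((m:ℝ)+1) * ((m:ℝ)+2) / 2) * (pp t * Real.exp (-((x+m+2) * t))))
      (nn t * Real.exp (-(x * t))) := by
  have hr0 : 0 < Real.exp (-t) := Real.exp_pos _
  have hr1 : Real.exp (-t) < 1 := Real.exp_lt_one_iff.2 (by linarith)
  have hnorm : ‖Real.exp (-t)‖ < 1 := by
    rw [Real.norm_eq_abs, abs_of_pos hr0]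
    exact hr1
  have hgeo := hasSum_choose_mul_geometric_of_norm_lt_one 2 hnorm
  have hgeo' : HasSum (fun n : ℕ => (((n:ℝ)+1) * ((n:ℝ)+2) / 2) * Real.exp (-t) ^ n)
      (1/(1 - Real.exp (-t))^3) := by
    convert hgeo using 2 with n
    · rfl
    rw [Nat.cast_choose_two]
    push_cast
    ring
  have h := hgeo'.mul_left (pp t * Real.exp (-((x+2)*t)))
  have hu1 : Real.exp t - 1 ≠ 0 := ne_of_gt (exp_sub_one_pos ht)
  have hu : Real.exp t ≠ 0 := (Real.exp_pos t).ne'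
  have hfun : (fun m : ℕ => pp t * Real.exp (-((x+2)*t))
      * ((((m:ℝ)+1) * ((m:ℝ)+2) / 2) * Real.exp (-t) ^ m))
      = (fun m : ℕ => (((m:ℝ)+1) * ((m:ℝ)+2) / 2) * (pp t * Real.exp (-((x+m+2) * t)))) := by
    funext m
    have hsplit : Real.exp (-((x+m+2)*t)) = Real.exp (-((x+2)*t)) * Real.exp (-t)^m := by
      rw [← Real.exp_nat_mul, ← Real.exp_add]
      congr 1
      push_cast
      ring
    rw [hsplit]
    ring
  have hval : pp t * Real.exp (-((x+2)*t)) * (1/(1 - Real.exp (-t))^3)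
      = nn t * Real.exp (-(x * t)) := by
    have hx2 : Real.exp (-((x+2)*t)) = Real.exp (-(x*t)) * (Real.exp t)⁻¹ * (Real.exp t)⁻¹ := by
      rw [← Real.exp_neg t, ← Real.exp_add, ← Real.exp_add]
      congr 1
      ring
    rw [hx2, Real.exp_neg t]
    unfold nn hh
    field_simp
  rw [hfun, hval] at h
  exact h

lemma N_integral {x : ℝ} (hx : 0 < x) :
    ∫ t in Ioi (0:ℝ), nn t * Real.exp (-(x * t)) = x ^ 2 * trigamma x - x - 1 / 2 := by
  set μ := volume.restrict (Ioi (0:ℝ)) with hμ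
  set f : ℕ → ℝ → ℝ :=
    fun m t => (((m:ℝ)+1) * ((m:ℝ)+2) / 2) * (pp t * Real.exp (-((x+m+2) * t))) with hf
  have hb : ∀ m : ℕ, (0:ℝ) < x + m + 2 := fun m => by positivity
  have hcont : ∀ m : ℕ, Continuous (f m) := by
    intro m
    apply Continuous.mul continuous_const
    apply Continuous.mul
    · unfold pp
      continuity
    · exact Real.continuous_exp.comp (by continuity)
  have hmeas : ∀ m : ℕ, AEStronglyMeasurable (f m) μ := fun m => (hcont m).aestronglyMeasurable
  have hint : ∀ m : ℕ, IntegrableOn (f m) (Ioi (0:ℝ)) := by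
    intro m
    have ha : (0:ℝ) < x + m + 1 := by positivity
    have base : IntegrableOn (fun t : ℝ => (t * Real.exp (-((x+(m:ℝ)+1)*t))
        - 2 * Real.exp (-((x+(m:ℝ)+1)*t)))
        + (t * Real.exp (-((x+(m:ℝ)+2)*t)) + 2 * Real.exp (-((x+(m:ℝ)+2)*t)))) (Ioi (0:ℝ)) :=
      (((integrableOn_mul_exp_neg_mul ha).sub ((integrableOn_exp_neg_mul ha).const_mul 2)).add
        ((integrableOn_mul_exp_neg_mul (hb m)).add ((integrableOn_exp_neg_mul (hb m)).const_mul 2)))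
    have hpt : (fun t : ℝ => pp t * Real.exp (-((x+(m:ℝ)+2) * t)))
        = fun t : ℝ => (t * Real.exp (-((x+(m:ℝ)+1)*t)) - 2 * Real.exp (-((x+(m:ℝ)+1)*t)))
          + (t * Real.exp (-((x+(m:ℝ)+2)*t)) + 2 * Real.exp (-((x+(m:ℝ)+2)*t))) := by
      funext t
      have he : Real.exp t * Real.exp (-((x+(m:ℝ)+2)*t)) = Real.exp (-((x+(m:ℝ)+1)*t)) := by
        rw [← Real.exp_add]
        congr 1
        ring
      unfold pp
      calc (Real.exp t * (t - 2) + t + 2) * Real.exp (-((x+(m:ℝ)+2) * t))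
          = (t - 2) * (Real.exp t * Real.exp (-((x+(m:ℝ)+2)*t)))
            + (t + 2) * Real.exp (-((x+(m:ℝ)+2) * t)) := by ring
        _ = (t - 2) * Real.exp (-((x+(m:ℝ)+1)*t)) + (t + 2) * Real.exp (-((x+(m:ℝ)+2) * t)) := by
            rw [he]
        _ = _ := by ring
    rw [← hpt] at base
    exact base.const_mul _
  have hnonneg : ∀ m : ℕ, ∀ t ∈ Ioi (0:ℝ), 0 ≤ f m t := by
    intro m t ht
    rw [mem_Ioi] at ht
    have h1 := pp_nonneg ht.le
    have h2 := (Real.exp_pos (-((x+(m:ℝ)+2) * t))).le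
    positivity
  have hnonneg' : ∀ m : ℕ, 0 ≤ᵐ[μ] f m := by
    intro m
    filter_upwards [ae_restrict_mem measurableSet_Ioi] with t ht
    exact hnonneg m t ht
  have hval : ∀ m : ℕ, ∫ t, f m t ∂μ = ((m:ℝ)+1) * ((m:ℝ)+2) / (2 * (x+m+1)^2 * (x+m+2)^2) :=
    fun m => N_summand_integral hx m
  have hlint : ∀ m : ℕ, ∫⁻ t, ‖f m t‖₊ ∂μ
      = ENNReal.ofReal (((m:ℝ)+1) * ((m:ℝ)+2) / (2 * (x+m+1)^2 * (x+m+2)^2)) := by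
    intro m
    rw [← hval m, ofReal_integral_eq_lintegral_ofReal (hint m) (hnonneg' m)]
    apply lintegral_congr_ae
    filter_upwards [hnonneg' m] with t h1
    rw [← Real.enorm_eq_ofReal h1]
    exact (enorm_eq_nnnorm _).symm
  have hsum : Summable (fun m : ℕ => ((m:ℝ)+1) * ((m:ℝ)+2) / (2 * (x+m+1)^2 * (x+m+2)^2)) :=
    (N_hasSum hx).summable
  have hfin : ∑' m : ℕ, ∫⁻ t, ‖f m t‖₊ ∂μ ≠ ⊤ := by
    simp only [hlint]
    rw [← ENNReal.ofReal_tsum_of_nonneg (fun m => by positivity) hsum]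
    exact ENNReal.ofReal_ne_top
  have hcongr : ∀ t ∈ Ioi (0:ℝ), nn t * Real.exp (-(x * t)) = ∑' m : ℕ, f m t :=
    fun t ht => (N_pointwise (mem_Ioi.1 ht)).tsum_eq.symm
  calc ∫ t in Ioi (0:ℝ), nn t * Real.exp (-(x * t))
      = ∫ t in Ioi (0:ℝ), ∑' m : ℕ, f m t := setIntegral_congr_fun measurableSet_Ioi hcongr
    _ = ∑' m : ℕ, ∫ t, f m t ∂μ := integral_tsum hmeas hfin
    _ = ∑' m : ℕ, ((m:ℝ)+1) * ((m:ℝ)+2) / (2 * (x+m+1)^2 * (x+m+2)^2) := tsum_congr hval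
    _ = x ^ 2 * trigamma x - x - 1 / 2 := (N_hasSum hx).tsum_eq

lemma key {x y : ℝ} (hx : 0 < x) (hy : 0 < y) (hxy : x < y) :
    (x ^ 2 * trigamma x - x - 1 / 2) * (y * trigamma y - 1) <
      (y ^ 2 * trigamma y - y - 1 / 2) * (x * trigamma x - 1) := by
  set μ := volume.restrict (Ioi (0:ℝ)) with hμ
  set H : ℝ × ℝ → ℝ := fun z => (nn z.1 * dd z.2 - nn z.2 * dd z.1) *
    (Real.exp (-(y*z.1)) * Real.exp (-(x*z.2)) - Real.exp (-(x*z.1)) * Real.exp (-(y*z.2)))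
    with hH
  have T1 := (N_integrable hy).mul_prod (D_integrable hx)
  have T2 := (N_integrable hx).mul_prod (D_integrable hy)
  have T3 := (D_integrable hy).mul_prod (N_integrable hx)
  have T4 := (D_integrable hx).mul_prod (N_integrable hy)
  have hHexp : H = fun z : ℝ × ℝ =>
      ((fun t => nn t * Real.exp (-(y*t))) z.1 * (fun t => dd t * Real.exp (-(x*t))) z.2
      - (fun t => nn t * Real.exp (-(x*t))) z.1 * (fun t => dd t * Real.exp (-(y*t))) z.2
      - (fun t => dd t * Real.exp (-(y*t))) z.1 * (fun t => nn t * Real.exp (-(x*t))) z.2)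
      + (fun t => dd t * Real.exp (-(x*t))) z.1 * (fun t => nn t * Real.exp (-(y*t))) z.2 := by
    funext z
    simp only [hH]
    ring
  have hHint : Integrable H (μ.prod μ) := by
    rw [hHexp]
    exact ((T1.sub T2).sub T3).add T4
  have hHval : ∫ z, H z ∂(μ.prod μ)
      = 2 * ((y ^ 2 * trigamma y - y - 1 / 2) * (x * trigamma x - 1)
        - (x ^ 2 * trigamma x - x - 1 / 2) * (y * trigamma y - 1)) := by
    have e1 : ∫ z : ℝ × ℝ, ((nn z.1 * Real.exp (-(y*z.1))) * (dd z.2 * Real.exp (-(x*z.2)))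
          - (nn z.1 * Real.exp (-(x*z.1))) * (dd z.2 * Real.exp (-(y*z.2)))
          - (dd z.1 * Real.exp (-(y*z.1))) * (nn z.2 * Real.exp (-(x*z.2)))
          + (dd z.1 * Real.exp (-(x*z.1))) * (nn z.2 * Real.exp (-(y*z.2)))) ∂(μ.prod μ)
        = (∫ z : ℝ × ℝ, ((nn z.1 * Real.exp (-(y*z.1))) * (dd z.2 * Real.exp (-(x*z.2)))
          - (nn z.1 * Real.exp (-(x*z.1))) * (dd z.2 * Real.exp (-(y*z.2)))
          - (dd z.1 * Real.exp (-(y*z.1))) * (nn z.2 * Real.exp (-(x*z.2)))) ∂(μ.prod μ))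
          + ∫ z : ℝ × ℝ, (dd z.1 * Real.exp (-(x*z.1))) * (nn z.2 * Real.exp (-(y*z.2))) ∂(μ.prod μ) := by
      apply integral_add
      · exact (T1.sub T2).sub T3
      · exact T4
    have e2 : ∫ z : ℝ × ℝ, ((nn z.1 * Real.exp (-(y*z.1))) * (dd z.2 * Real.exp (-(x*z.2)))
          - (nn z.1 * Real.exp (-(x*z.1))) * (dd z.2 * Real.exp (-(y*z.2)))
          - (dd z.1 * Real.exp (-(y*z.1))) * (nn z.2 * Real.exp (-(x*z.2)))) ∂(μ.prod μ)
        = (∫ z : ℝ × ℝ, ((nn z.1 * Real.exp (-(y*z.1))) * (dd z.2 * Real.exp (-(x*z.2)))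
          - (nn z.1 * Real.exp (-(x*z.1))) * (dd z.2 * Real.exp (-(y*z.2)))) ∂(μ.prod μ))
          - ∫ z : ℝ × ℝ, (dd z.1 * Real.exp (-(y*z.1))) * (nn z.2 * Real.exp (-(x*z.2))) ∂(μ.prod μ) := by
      apply integral_sub
      · exact T1.sub T2
      · exact T3
    have e3 : ∫ z : ℝ × ℝ, ((nn z.1 * Real.exp (-(y*z.1))) * (dd z.2 * Real.exp (-(x*z.2)))
          - (nn z.1 * Real.exp (-(x*z.1))) * (dd z.2 * Real.exp (-(y*z.2)))) ∂(μ.prod μ)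
        = (∫ z : ℝ × ℝ, (nn z.1 * Real.exp (-(y*z.1))) * (dd z.2 * Real.exp (-(x*z.2))) ∂(μ.prod μ))
          - ∫ z : ℝ × ℝ, (nn z.1 * Real.exp (-(x*z.1))) * (dd z.2 * Real.exp (-(y*z.2))) ∂(μ.prod μ) := by
      apply integral_sub
      · exact T1
      · exact T2
    have f1 : ∫ z : ℝ × ℝ, (nn z.1 * Real.exp (-(y*z.1))) * (dd z.2 * Real.exp (-(x*z.2))) ∂(μ.prod μ)
        = (∫ t, nn t * Real.exp (-(y*t)) ∂μ) * ∫ t, dd t * Real.exp (-(x*t)) ∂μ :=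
      integral_prod_mul (fun t => nn t * Real.exp (-(y*t))) (fun t => dd t * Real.exp (-(x*t)))
    have f2 : ∫ z : ℝ × ℝ, (nn z.1 * Real.exp (-(x*z.1))) * (dd z.2 * Real.exp (-(y*z.2))) ∂(μ.prod μ)
        = (∫ t, nn t * Real.exp (-(x*t)) ∂μ) * ∫ t, dd t * Real.exp (-(y*t)) ∂μ :=
      integral_prod_mul (fun t => nn t * Real.exp (-(x*t))) (fun t => dd t * Real.exp (-(y*t)))
    have f3 : ∫ z : ℝ × ℝ, (dd z.1 * Real.exp (-(y*z.1))) * (nn z.2 * Real.exp (-(x*z.2))) ∂(μ.prod μ)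
        = (∫ t, dd t * Real.exp (-(y*t)) ∂μ) * ∫ t, nn t * Real.exp (-(x*t)) ∂μ :=
      integral_prod_mul (fun t => dd t * Real.exp (-(y*t))) (fun t => nn t * Real.exp (-(x*t)))
    have f4 : ∫ z : ℝ × ℝ, (dd z.1 * Real.exp (-(x*z.1))) * (nn z.2 * Real.exp (-(y*z.2))) ∂(μ.prod μ)
        = (∫ t, dd t * Real.exp (-(x*t)) ∂μ) * ∫ t, nn t * Real.exp (-(y*t)) ∂μ :=
      integral_prod_mul (fun t => dd t * Real.exp (-(x*t))) (fun t => nn t * Real.exp (-(y*t)))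
    have hNy : ∫ t, nn t * Real.exp (-(y*t)) ∂μ = y ^ 2 * trigamma y - y - 1/2 := N_integral hy
    have hNx : ∫ t, nn t * Real.exp (-(x*t)) ∂μ = x ^ 2 * trigamma x - x - 1/2 := N_integral hx
    have hDy : ∫ t, dd t * Real.exp (-(y*t)) ∂μ = y * trigamma y - 1 := D_integral hy
    have hDx : ∫ t, dd t * Real.exp (-(x*t)) ∂μ = x * trigamma x - 1 := D_integral hx
    have hHeq : ∫ z, H z ∂(μ.prod μ)
        = ∫ z : ℝ × ℝ, ((nn z.1 * Real.exp (-(y*z.1))) * (dd z.2 * Real.exp (-(x*z.2)))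
          - (nn z.1 * Real.exp (-(x*z.1))) * (dd z.2 * Real.exp (-(y*z.2)))
          - (dd z.1 * Real.exp (-(y*z.1))) * (nn z.2 * Real.exp (-(x*z.2)))
          + (dd z.1 * Real.exp (-(x*z.1))) * (nn z.2 * Real.exp (-(y*z.2)))) ∂(μ.prod μ) := by
      apply integral_congr_ae
      apply Filter.Eventually.of_forall
      intro z
      simp only [hH]
      ring
    rw [hHeq, e1, e2, e3, f1, f2, f3, f4, hNy, hNx, hDy, hDx]
    ring
  have Hpos : ∀ s t : ℝ, 0 < s → s < t → 0 < H (s, t) := by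
    intro s t hs hst
    have ht : 0 < t := hs.trans hst
    apply mul_pos
    · rw [sub_pos]
      exact cross_lt hs hst
    · rw [sub_pos, ← Real.exp_add, ← Real.exp_add]
      apply Real.exp_lt_exp.2
      nlinarith
  have Hnonneg : ∀ s t : ℝ, 0 < s → 0 < t → 0 ≤ H (s, t) := by
    intro s t hs ht
    rcases lt_trichotomy s t with h | h | h
    · exact (Hpos s t hs h).le
    · subst h
      simp [hH]
    · apply le_of_lt
      apply mul_pos_of_neg_of_neg
      · rw [sub_neg]
        exact cross_lt ht h
      · rw [sub_neg, ← Real.exp_add, ← Real.exp_add]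
        apply Real.exp_lt_exp.2
        nlinarith
  have hae : 0 ≤ᵐ[μ.prod μ] H := by
    rw [hμ, Measure.prod_restrict]
    filter_upwards [ae_restrict_mem (measurableSet_Ioi.prod measurableSet_Ioi)] with z hz
    exact Hnonneg z.1 z.2 hz.1 hz.2
  have hsupp : 0 < (μ.prod μ) (Function.support H) := by
    have hbox : (Ioo (1:ℝ) 2) ×ˢ (Ioo (3:ℝ) 4) ⊆ Function.support H := by
      intro z hz
      rw [Set.mem_prod] at hz
      have h1 : 0 < z.1 := by linarith [hz.1.1]
      have h2 : z.1 < z.2 := by linarith [hz.1.2, hz.2.1]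
      have := Hpos z.1 z.2 h1 h2
      simp only [Function.mem_support]
      intro hcon
      rw [show ((z.1, z.2) : ℝ × ℝ) = z from rfl] at this
      linarith [this]
    calc (0:ℝ≥0∞) < 1 := by norm_num
      _ = (μ.prod μ) ((Ioo (1:ℝ) 2) ×ˢ (Ioo (3:ℝ) 4)) := by
          rw [Measure.prod_prod, hμ, Measure.restrict_apply measurableSet_Ioo,
            Measure.restrict_apply measurableSet_Ioo]
          rw [inter_eq_self_of_subset_left (fun a (ha : a ∈ Ioo (1:ℝ) 2) => by
              simp only [mem_Ioi]; linarith [ha.1]),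
            inter_eq_self_of_subset_left (fun a (ha : a ∈ Ioo (3:ℝ) 4) => by
              simp only [mem_Ioi]; linarith [ha.1])]
          rw [Real.volume_Ioo, Real.volume_Ioo]
          norm_num
      _ ≤ _ := measure_mono hbox
  have hpos := (integral_pos_iff_support_of_nonneg_ae hae hHint).2 hsupp
  rw [hHval] at hpos
  linarith

theorem stmt_14 :
    StrictMonoOn
      (fun x : ℝ => (x ^ 2 * trigamma x - x - 1 / 2) / (x * trigamma x - 1))
      (Set.Ioi 0) := by
  intro a ha b hb hab
  simp only
  rw [div_lt_div_iff₀ (D_pos ha) (D_pos hb)]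
  exact key ha hb hab
end
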